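/- For size expressions a and b, a ≃_A b (i.e., a ≤_A b and b ≤_A a) if and only if a↓ = b↓, where a↓ denotes the normal form of a with respect to the rule s∞ → ∞. -/

import Mathlib

/-- Size expressions of the size algebra A: a ::= α | s a | ∞. -/
inductive SExpr : Type
  | var : ℕ → SExpr
  | s : SExpr → SExpr
  | infty : SExpr
deriving DecidableEq

/-- The quasi-ordering ≤_A on size expressions. -/
inductive SLe : SExpr → SExpr → Prop
  | refl (a) : SLe a a
  | trans {a b c} : SLe a b → SLe b c → SLe a c
  | mon {a b} : SLe a b → SLe (.s a) (.s b)
  | succ {a b} : SLe a b → SLe a (.s b)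
  | infty (a) : SLe a .infty

/-- Normal form w.r.t. the rewrite rule s∞ → ∞. -/
def nf : SExpr → SExpr
  | .var α => .var α
  | .infty => .infty
  | .s a =>
    match nf a with
    | .infty => .infty
    | b => .s b

/-- Action of a size substitution on size expressions. -/
def subst (φ : ℕ → SExpr) : SExpr → SExpr
  | .var α => φ α
  | .s a => .s (subst φ a)
  | .infty => .infty

/-! Interpret a size expression in `WithTop (Σ _ : ℕ, ℕ)`, where `s^n α` becomes `⟨α, n⟩` and `∞`
becomes `⊤`; the disjoint-sum order on the sigma type compares only successor counts over the
same variable. Every rule of `≤_A` is sound for this partial order, so `a ≃_A b` forces equal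
interpretations, and the normal form is a function of the interpretation. Conversely `a ≃_A nf a`,
which gives the other direction. -/

namespace SExpr

def den : SExpr → WithTop (Σ _ : ℕ, ℕ)
  | .var α => ↑(⟨α, 0⟩ : Σ _ : ℕ, ℕ)
  | .s a => (den a).map fun p => ⟨p.1, p.2 + 1⟩
  | .infty => ⊤

def decode : WithTop (Σ _ : ℕ, ℕ) → SExpr
  | ⊤ => .infty
  | (⟨α, n⟩ : Σ _ : ℕ, ℕ) => SExpr.s^[n] (.var α)

end SExpr

open SExpr

theorem den_le_den_s (a : SExpr) : den a ≤ den (.s a) := by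
  rw [den]
  cases den a with
  | top => exact le_top
  | coe p => exact WithTop.coe_le_coe.mpr (Sigma.mk_le_mk_iff.mpr p.2.le_succ)

theorem SLe.den_le {a b : SExpr} (h : SLe a b) : den a ≤ den b := by
  induction h with
  | refl => exact le_rfl
  | trans _ _ ih₁ ih₂ => exact ih₁.trans ih₂
  | mon _ ih => exact WithTop.map_le_iff _ (by simp [Sigma.le_def]) |>.mpr ih
  | succ _ ih => exact ih.trans (den_le_den_s _)
  | infty => exact le_top

theorem nf_s (a : SExpr) : nf (.s a) = if nf a = .infty then .infty else .s (nf a) := by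
  simp only [nf]
  split <;> simp_all

theorem nf_eq_decode_den (a : SExpr) : nf a = decode (den a) := by
  induction a with
  | var α => rfl
  | infty => rfl
  | s a ih =>
    rw [nf_s, ih, den]
    cases den a with
    | top => rfl
    | coe p =>
      have : s^[p.2] (var p.1) ≠ infty := by cases p.2 <;> simp [Function.iterate_succ_apply']
      simp [decode, this, Function.iterate_succ_apply']

theorem sle_nf (a : SExpr) : SLe a (nf a) := by
  induction a with
  | var α => exact .refl _
  | infty => exact .refl _
  | s a ih =>
    rw [nf_s]
    split_ifs
    · exact .infty _
    · exact .mon ih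

theorem nf_sle (a : SExpr) : SLe (nf a) a := by
  induction a with
  | var α => exact .refl _
  | infty => exact .refl _
  | s a ih =>
    rw [nf_s]
    split_ifs with h
    · exact .succ (h ▸ ih)
    · exact .mon ih

theorem sle_of_nf_eq {a b : SExpr} (h : nf a = nf b) : SLe a b :=
  (sle_nf a).trans (h ▸ nf_sle b)

/-- a ≃_A b (i.e. a ≤_A b and b ≤_A a) iff a and b have the same normal form
w.r.t. s∞ → ∞. -/
theorem sle_antisymm_iff_nf_eq (a b : SExpr) :
    (SLe a b ∧ SLe b a) ↔ nf a = nf b := by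
  constructor
  · rintro ⟨hab, hba⟩
    rw [nf_eq_decode_den, nf_eq_decode_den, hab.den_le.antisymm hba.den_le]
  · intro h
    exact ⟨sle_of_nf_eq h, sle_of_nf_eq h.symm⟩
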